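/- Let p be an odd prime and n ≥ 1. Let A be the cyclic group of order 2p^n with generator g, and let G = (A × A) ⋊ C₂ be the wreath product A ≀ C₂, where the nontrivial element of C₂ acts by swapping the two coordinates of A × A. Set a = ((g,1),1). If H is a maximal subgroup of G isomorphic to Dic_{p^n} × C_{p^n}, the direct product of the dicyclic group of order 4p^n with the cyclic group of order p^n, then H = ⟨a·y₀, a²⟩ for some involution y₀ of G lying outside the base subgroup A × A. -/

import Mathlib

/-!
Write `m = p ^ n`, `σ` for the generator of the top group `C₂` and `b = a σ`. Since
`|G| = 8 m²` and `|H| = 4 m²`, `H` has index 2, so it contains every square, in particular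
`b² = ((g, g), 1)` and with it the involution `((g ^ m, g ^ m), 1)`. For odd `m` the group
`Dic_m × C_m` has a unique involution, so neither `σ` nor `a` lies in `H` (otherwise `σ`,
resp. `a ^ m`, would be a second one), and index 2 forces `b = a σ ∈ H`. Hence
`⟨b, a²⟩ ≤ H`. Conversely `⟨b, a²⟩` contains the kernel of the parity character
`((x, y), ε) ↦ x + y + ε mod 2`, which has index at most 2, so `⟨b, a²⟩ = H`.
-/

open SemidirectProduct

/-- The homomorphism from `C₂ = Multiplicative (ZMod 2)` determined by an element `τ`
of a group satisfying `τ * τ = 1`. -/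
def homC2 {H : Type*} [Group H] (τ : H) (hτ : τ * τ = 1) : Multiplicative (ZMod 2) →* H where
  toFun s := if s.toAdd = 0 then 1 else τ
  map_one' := by simp
  map_mul' x y := by
    have h2 : ∀ z : ZMod 2, z = 0 ∨ z = 1 := by decide
    have h11 : (1 : ZMod 2) + 1 = 0 := by decide
    rcases h2 x.toAdd with hx | hx <;> rcases h2 y.toAdd with hy | hy <;>
      simp [toAdd_mul, hx, hy, h11, hτ]

/-- The coordinate-swapping automorphism of `A × A`. -/
def swapAut (A : Type*) [Group A] : MulAut (A × A) := (MulEquiv.prodComm : A × A ≃* A × A)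

theorem swapAut_sq (A : Type*) [Group A] : swapAut A * swapAut A = 1 := by
  ext p <;> simp [swapAut, MulAut.mul_apply]

/-- The action of `C₂` on `A × A` swapping the two coordinates. -/
def swapAction (A : Type*) [Group A] : Multiplicative (ZMod 2) →* MulAut (A × A) :=
  homC2 (swapAut A) (swapAut_sq A)

/-- The wreath product `A ≀ C₂ = (A × A) ⋊ C₂`, where the nontrivial element of `C₂`
acts by swapping the two coordinates of `A × A`. -/
abbrev WreathC2 (A : Type*) [Group A] := (A × A) ⋊[swapAction A] Multiplicative (ZMod 2)


theorem ZMod.eq_of_add_self_eq_zero {n : ℕ} [NeZero n] {i : ZMod (2 * n)} (h : i + i = 0)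
    (hi : i ≠ 0) : i = n := by
  have hlt := ZMod.val_lt i
  have hpos : 0 < i.val := ZMod.val_pos.2 hi
  have h0 : (i + i).val = 0 := by rw [h, ZMod.val_zero]
  rcases lt_or_ge (i.val + i.val) (2 * n) with hl | hl
  · rw [ZMod.val_add_of_lt hl] at h0
    omega
  · rw [ZMod.val_add_of_le hl] at h0
    rw [← ZMod.natCast_zmod_val i]
    congr 1
    omega

theorem ZMod.exists_eq_two_mul_of_castHom_eq_zero {n : ℕ} (h : 2 ∣ n) {z : ZMod n}
    (hz : ZMod.castHom h (ZMod 2) z = 0) : ∃ w, z = 2 * w := by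
  rw [ZMod.castHom_apply, ← ZMod.intCast_cast, ZMod.intCast_zmod_eq_zero_iff_dvd] at hz
  obtain ⟨k, hk⟩ := hz
  exact ⟨k, by rw [← ZMod.intCast_zmod_cast z, hk]; push_cast; ring⟩

theorem Multiplicative.eq_one_or_eq_ofAdd_one (ε : Multiplicative (ZMod 2)) :
    ε = 1 ∨ ε = ofAdd 1 := by
  revert ε
  decide

theorem orderOf_pow_eq_two {G : Type*} [Monoid G] {x : G} {m : ℕ} (hm : m ≠ 0)
    (hx : orderOf x = 2 * m) : orderOf (x ^ m) = 2 := by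
  rw [orderOf_pow_of_dvd hm (hx ▸ dvd_mul_left m 2), hx,
    Nat.mul_div_cancel _ (Nat.pos_of_ne_zero hm)]

theorem Prod.orderOf_eq_two {K L : Type*} [Group K] [Group L] (hL : Odd (Nat.card L))
    {x : K × L} (hx : orderOf x = 2) : orderOf x.1 = 2 ∧ x.2 = 1 := by
  rw [Prod.orderOf] at hx
  have h2 : orderOf x.2 = 1 := by
    have hodd : Odd (orderOf x.2) := hL.of_dvd_nat (orderOf_dvd_natCard x.2)
    have hdvd : orderOf x.2 ∣ 2 := hx ▸ Nat.dvd_lcm_right _ _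
    rcases (Nat.dvd_prime Nat.prime_two).1 hdvd with h | h
    · exact h
    · exact absurd (h ▸ hodd) (by decide)
  rw [h2, Nat.lcm_one_right] at hx
  exact ⟨hx, orderOf_eq_one_iff.1 h2⟩

theorem Subgroup.orderOf_eq_two_subsingleton_of_mulEquiv {G K : Type*} [Group G] [Group K]
    {H : Subgroup G} (e : H ≃* K) (hK : {k : K | orderOf k = 2}.Subsingleton) :
    {x : G | x ∈ H ∧ orderOf x = 2}.Subsingleton := by
  rintro x ⟨hx, hx2⟩ y ⟨hy, hy2⟩
  have key : e ⟨x, hx⟩ = e ⟨y, hy⟩ :=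
    hK (by simpa [orderOf_mk] using hx2) (by simpa [orderOf_mk] using hy2)
  exact congrArg Subtype.val (e.injective key)

namespace QuaternionGroup

theorem eq_a_of_orderOf_eq_two {n : ℕ} [NeZero n] {q : QuaternionGroup n}
    (hq : orderOf q = 2) : q = a n := by
  cases q with
  | a i =>
    have hsq : a i * a i = 1 := by rw [← sq, ← hq, pow_orderOf_eq_one]
    have hi : i ≠ 0 := by
      rintro rfl
      rw [← one_def, orderOf_one] at hq
      exact absurd hq (by norm_num)
    rw [a_mul_a, one_def, a.injEq] at hsq
    rw [ZMod.eq_of_add_self_eq_zero hsq hi]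
  | xa i => exact absurd (hq ▸ orderOf_xa i) (by norm_num)

theorem prod_eq_of_orderOf_eq_two {m : ℕ} (hm : Odd m)
    {x : QuaternionGroup m × Multiplicative (ZMod m)} (hx : orderOf x = 2) :
    x = (a m, 1) := by
  have : NeZero m := ⟨hm.pos.ne'⟩
  have hcard : Odd (Nat.card (Multiplicative (ZMod m))) := by simpa using hm
  obtain ⟨h1, h2⟩ := Prod.orderOf_eq_two hcard hx
  exact Prod.ext (eq_a_of_orderOf_eq_two h1) h2

end QuaternionGroup

namespace WreathC2

section General

variable {A : Type*} [Group A]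

@[simp]
theorem swapAction_ofAdd_one_apply (v : A × A) :
    swapAction A (Multiplicative.ofAdd 1) v = v.swap := by
  simp [swapAction, homC2, swapAut]

def swap : WreathC2 A := inr (Multiplicative.ofAdd 1)

theorem inl_mul_swap_sq (v : A × A) : (inl v * swap) ^ 2 = inl (v * v.swap) := by
  ext <;> simp [sq, swap]
  decide

theorem orderOf_swap : orderOf (swap : WreathC2 A) = 2 := by
  rw [swap, orderOf_injective inr inr_injective, orderOf_ofAdd_eq_addOrderOf,
    ZMod.addOrderOf_one]

theorem swap_notMem_range_inl : (swap : WreathC2 A) ∉ (inl : A × A →* WreathC2 A).range := by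
  rintro ⟨v, hv⟩
  have h : swap.right = (inl v : WreathC2 A).right := congrArg right hv.symm
  simp [swap] at h

theorem card : Nat.card (WreathC2 A) = Nat.card A ^ 2 * 2 := by
  simp [SemidirectProduct.card, sq]

end General

section Comm

variable {A : Type*} [CommGroup A]

def coordProd : WreathC2 A →* A :=
  lift (MonoidHom.fst A A * MonoidHom.snd A A) 1 fun ε => by
    ext v
    rcases Multiplicative.eq_one_or_eq_ofAdd_one ε with rfl | rfl
    · simp
    · simp [mul_comm]

@[simp]
theorem coordProd_inl (v : A × A) : coordProd (inl v) = v.1 * v.2 := by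
  simp [coordProd]

@[simp]
theorem coordProd_inr (ε : Multiplicative (ZMod 2)) : coordProd (inr ε : WreathC2 A) = 1 := by
  simp [coordProd]

end Comm

section Cyclic

variable (m : ℕ)

local notation "𝔾" => WreathC2 (Multiplicative (ZMod (2 * m)))
local notation "g" => (Multiplicative.ofAdd (1 : ZMod (2 * m)))

def parity : 𝔾 →* Multiplicative (ZMod 2) :=
  (ZMod.castHom (dvd_mul_right 2 m) (ZMod 2)).toAddMonoidHom.toMultiplicative.comp coordProd *
    rightHom

theorem parity_inl (v : Multiplicative (ZMod (2 * m)) × Multiplicative (ZMod (2 * m))) :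
    parity m (inl v) =
      Multiplicative.ofAdd (ZMod.castHom (dvd_mul_right 2 m) (ZMod 2) (v.1.toAdd + v.2.toAdd)) := by
  simp [parity]

theorem parity_inr (ε : Multiplicative (ZMod 2)) : parity m (inr ε) = ε := by
  simp [parity]

theorem inl_mem_of_parity_eq_one {S : Subgroup 𝔾} (hgg : inl (g, g) ∈ S)
    (hg2 : inl (g ^ 2, 1) ∈ S)
    {v : Multiplicative (ZMod (2 * m)) × Multiplicative (ZMod (2 * m))}
    (hv : parity m (inl v) = 1) : inl v ∈ S := by
  rw [parity_inl, ofAdd_eq_one] at hv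
  obtain ⟨w, hw⟩ := ZMod.exists_eq_two_mul_of_castHom_eq_zero (dvd_mul_right 2 m) hv
  have hdecomp :
      v = (g, g) ^ (v.2.toAdd.cast : ℤ) * (g ^ 2, 1) ^ ((w - v.2.toAdd).cast : ℤ) := by
    ext
    · simp [← ofAdd_zsmul]
      linear_combination hw
    · simp [← ofAdd_zsmul]
  rw [hdecomp, map_mul, map_zpow, map_zpow]
  exact S.mul_mem (S.zpow_mem hgg _) (S.zpow_mem hg2 _)

theorem ker_parity_le_closure :
    (parity m).ker ≤ Subgroup.closure {inl (g, 1) * swap, inl (g, 1) ^ 2} := by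
  set C := Subgroup.closure ({inl (g, 1) * swap, inl (g, 1) ^ 2} : Set 𝔾)
  have hb : inl (g, 1) * swap ∈ C := Subgroup.subset_closure (by simp)
  have hgg : inl (g, g) ∈ C := by
    simpa [inl_mul_swap_sq] using C.pow_mem hb 2
  have hg2 : inl (g ^ 2, 1) ∈ C := by
    have h : inl (g, 1) ^ 2 ∈ C := Subgroup.subset_closure (by simp)
    rwa [← map_pow, Prod.pow_mk, one_pow] at h
  have hparity_b : parity m (inl (g, 1) * swap) = 1 := by
    rw [map_mul, parity_inl, swap, parity_inr]
    simp only [toAdd_ofAdd, toAdd_one, add_zero, map_one]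
    decide
  intro z hz
  rw [← inl_left_mul_inr_right z] at hz ⊢
  rcases Multiplicative.eq_one_or_eq_ofAdd_one z.right with h | h
  · rw [h, map_one, mul_one] at hz ⊢
    exact inl_mem_of_parity_eq_one m hgg hg2 hz
  · have hz' : inl z.left * inr z.right = inl (z.left * (g, 1)⁻¹) * (inl (g, 1) * swap) := by
      rw [h, swap, map_mul, map_inv, mul_assoc, inv_mul_cancel_left]
    rw [hz'] at hz ⊢
    rw [MonoidHom.mem_ker, map_mul, hparity_b, mul_one] at hz
    exact C.mul_mem (inl_mem_of_parity_eq_one m hgg hg2 hz) hb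

theorem index_ker_parity_le_two : (parity m).ker.index ≤ 2 := by
  rw [Subgroup.index_ker]
  exact (Subgroup.card_le_card_group _).trans (by simp)

theorem index_eq_two_of_mulEquiv [NeZero m] {H : Subgroup 𝔾}
    (e : H ≃* QuaternionGroup m × Multiplicative (ZMod m)) : H.index = 2 := by
  have hG : Nat.card 𝔾 = 4 * m ^ 2 * 2 := by
    rw [card]
    simp only [Nat.card_eq_fintype_card, Fintype.card_multiplicative, ZMod.card]
    ring
  have hH : Nat.card H = 4 * m ^ 2 := by
    rw [Nat.card_congr e.toEquiv, Nat.card_prod, Nat.card_eq_fintype_card, QuaternionGroup.card]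
    simp only [Nat.card_eq_fintype_card, Fintype.card_multiplicative, ZMod.card]
    ring
  have h := H.card_mul_index
  rw [hG, hH] at h
  exact Nat.eq_of_mul_eq_mul_left (by have := NeZero.pos m; positivity) h

theorem mul_swap_mem_of_index_eq_two [NeZero m] {H : Subgroup 𝔾} (hidx : H.index = 2)
    (hinv : {x : 𝔾 | x ∈ H ∧ orderOf x = 2}.Subsingleton) : inl (g, 1) * swap ∈ H := by
  have hg : orderOf g = 2 * m := by
    rw [orderOf_ofAdd_eq_addOrderOf, ZMod.addOrderOf_one]
  have hw : inl ((g, g) ^ m) ∈ H ∧ orderOf (inl ((g, g) ^ m) : 𝔾) = 2 := by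
    constructor
    · have h := H.pow_mem (Subgroup.sq_mem_of_index_two hidx (inl (g, 1) * swap)) m
      simpa [inl_mul_swap_sq, ← map_pow] using h
    · rw [orderOf_injective inl inl_injective]
      exact orderOf_pow_eq_two (NeZero.ne m) (by simp [Prod.orderOf, hg])
  have hswap : swap ∉ H := fun h =>
    swap_notMem_range_inl ⟨_, (hinv ⟨h, orderOf_swap⟩ hw).symm⟩
  have ha : inl (g, 1) ∉ H := by
    intro h
    have ham : orderOf (inl ((g, 1) ^ m) : 𝔾) = 2 := by
      rw [orderOf_injective inl inl_injective]
      exact orderOf_pow_eq_two (NeZero.ne m) (by simp [Prod.orderOf, hg])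
    have hamw := hinv ⟨by simpa [← map_pow] using H.pow_mem h m, ham⟩ hw
    rw [inl_injective.eq_iff] at hamw
    have hgm : g ^ m ≠ 1 :=
      pow_ne_one_of_lt_orderOf (NeZero.ne m) (by rw [hg]; have := NeZero.pos m; omega)
    exact hgm (by simpa using (congrArg Prod.snd hamw).symm)
  exact (Subgroup.mul_mem_iff_of_index_two hidx).2 (iff_of_false ha hswap)

theorem eq_closure_of_index_eq_two {H : Subgroup 𝔾} (hidx : H.index = 2)
    (hb : inl (g, 1) * swap ∈ H) : H = Subgroup.closure {inl (g, 1) * swap, inl (g, 1) ^ 2} := by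
  have hCH : Subgroup.closure {inl (g, 1) * swap, inl (g, 1) ^ 2} ≤ H := by
    rw [Subgroup.closure_le, Set.insert_subset_iff, Set.singleton_subset_iff]
    exact ⟨hb, Subgroup.sq_mem_of_index_two hidx _⟩
  have hker := ker_parity_le_closure m
  have := Subgroup.finiteIndex_of_le hker
  refine (eq_of_le_of_not_lt hCH fun hlt => ?_).symm
  have := Subgroup.index_strictAnti hlt
  have := Subgroup.index_antitone hker
  have := index_ker_parity_le_two m
  omega

end Cyclic

end WreathC2

theorem maximal_dicyclic_subgroup_of_wreath_general (p n : ℕ) (hodd : Odd p)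
    (H : Subgroup (WreathC2 (Multiplicative (ZMod (2 * p ^ n)))))
    (hiso : Nonempty (H ≃* QuaternionGroup (p ^ n) × Multiplicative (ZMod (p ^ n)))) :
    letI A := Multiplicative (ZMod (2 * p ^ n))
    letI G := WreathC2 A
    let g : A := Multiplicative.ofAdd 1
    let a : G := inl (g, 1)
    ∃ y₀ : G, orderOf y₀ = 2 ∧ y₀ ∉ (inl : (A × A) →* G).range ∧
      H = Subgroup.closure {a * y₀, a ^ 2} := by
  obtain ⟨e⟩ := hiso
  have : NeZero (p ^ n) := ⟨hodd.pow.pos.ne'⟩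
  have hidx := WreathC2.index_eq_two_of_mulEquiv _ e
  have hinv := Subgroup.orderOf_eq_two_subsingleton_of_mulEquiv e
    (Set.subsingleton_of_forall_eq _ fun _ => QuaternionGroup.prod_eq_of_orderOf_eq_two hodd.pow)
  have hb := WreathC2.mul_swap_mem_of_index_eq_two _ hidx hinv
  exact ⟨WreathC2.swap, WreathC2.orderOf_swap, WreathC2.swap_notMem_range_inl,
    WreathC2.eq_closure_of_index_eq_two _ hidx hb⟩

/-- Let `p` be an odd prime, `G = A ≀ C₂` with `A` cyclic of order `2 p ^ n` with
generator `g`, and `a = ((g,1),1)`.  If `H` is a maximal subgroup of `G` isomorphic to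
`Dic_{p^n} × C_{p^n}`, then `H = ⟨a y₀, a²⟩` for some involution `y₀` of `G` outside
the base subgroup `A × A`. -/
theorem maximal_dicyclic_subgroup_of_wreath (p n : ℕ) (hp : p.Prime) (hodd : Odd p)
    (hn : 1 ≤ n)
    (H : Subgroup (WreathC2 (Multiplicative (ZMod (2 * p ^ n))))) (hH : IsCoatom H)
    (hiso : Nonempty (H ≃* QuaternionGroup (p ^ n) × Multiplicative (ZMod (p ^ n)))) :
    letI A := Multiplicative (ZMod (2 * p ^ n))
    letI G := WreathC2 A
    let g : A := Multiplicative.ofAdd 1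
    let a : G := inl (g, 1)
    ∃ y₀ : G, orderOf y₀ = 2 ∧ y₀ ∉ (inl : (A × A) →* G).range ∧
      H = Subgroup.closure {a * y₀, a ^ 2} :=
  maximal_dicyclic_subgroup_of_wreath_general p n hodd H hiso
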